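/- arXiv:1701.04474 — 2 statements merged into one kernel-verified Lean document; each statement's English description precedes it below -/
import Mathlib

section
/- Let U be an ℓ×ℓ complex unitary matrix with spectral decomposition U = Σ_{r=1}^m λ_r F_r. Then for every unit vector x ∈ ℂ^ℓ and every positive integer K, Σ_{j=1}^ℓ | (1/K) Σ_{k=0}^{K-1} x* (U^k)* D_j U^k x − Σ_{r=1}^m x* F_r D_j F_r x | ≤ (2/K) Σ_{r ≠ s} Σ_{j=1}^ℓ √((F_r)_{jj} (F_s)_{jj}) / |λ_r − λ_s|. -/
/-!
With `v r = F r *ᵥ x`, the amplitude after `k` steps is `(U ^ k *ᵥ x) j = ∑ r, λ r ^ k * v r j`,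
so the time average of `|(U ^ k *ᵥ x) j|²` differs from `∑ r, |v r j|²` only by the cross terms
`r ≠ s`. Each of them carries the Cesàro mean of the powers of the unimodular number
`conj (λ r) * λ s ≠ 1`, which the geometric sum formula bounds by `2 / (K * |λ r - λ s|)`, while
Cauchy–Schwarz against the `j`-th column of the projection `F r` gives `|v r j| ≤ √(F r j j)`.
-/

open Matrix Finset

lemma CompleteOrthogonalIdempotents.sum_smul_pow {ι R A : Type*} [Fintype ι] [CommSemiring R]
    [Semiring A] [Algebra R A] {e : ι → A} (he : CompleteOrthogonalIdempotents e) (c : ι → R)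
    (k : ℕ) : (∑ i, c i • e i) ^ k = ∑ i, c i ^ k • e i := by
  classical
  induction k with
  | zero => simp [he.complete]
  | succ k ih =>
    simp only [pow_succ, ih, sum_mul, mul_sum, smul_mul_smul_comm, he.mul_eq]
    simp

namespace Matrix

variable {n : Type*} [Fintype n]

lemma dotProduct_conjTranspose_mul_single_mul_mulVec {R : Type*} [DecidableEq n]
    [CommSemiring R] [StarRing R] (A : Matrix n n R) (x : n → R) (j : n) :
    star x ⬝ᵥ ((Aᴴ * single j j 1 * A) *ᵥ x) = star ((A *ᵥ x) j) * (A *ᵥ x) j := by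
  rw [← mulVec_mulVec, ← mulVec_mulVec, dotProduct_mulVec, ← star_mulVec, single_mulVec]
  simp [dotProduct, Function.update_apply]

lemma norm_mulVec_apply_le (A : Matrix n n ℂ) (x : n → ℂ) (j : n) :
    ‖(A *ᵥ x) j‖ ≤ √((A * Aᴴ) j j).re * √(star x ⬝ᵥ x).re := by
  have hnorm : ∀ v : n → ℂ, ‖WithLp.toLp 2 v‖ = √(star v ⬝ᵥ v).re := fun v => by
    rw [norm_eq_sqrt_re_inner (𝕜 := ℂ), EuclideanSpace.inner_eq_star_dotProduct, dotProduct_comm]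
    rfl
  have hrow : (A * Aᴴ) j j = star (star (A j)) ⬝ᵥ star (A j) := by
    simp [mul_apply, dotProduct]
  have hinner : (A *ᵥ x) j = inner ℂ (WithLp.toLp 2 (star (A j))) (WithLp.toLp 2 x) := by
    rw [EuclideanSpace.inner_eq_star_dotProduct, dotProduct_comm]
    simp [mulVec]
  rw [hinner, hrow, ← hnorm, ← hnorm]
  exact norm_inner_le_norm _ _

section StarProjection

variable {P : Matrix n n ℂ} (hP : P.IsHermitian) (hP' : IsIdempotentElem P)
include hP hP'

open ComplexOrder in
lemma IsHermitian.re_diag_nonneg_of_isIdempotentElem (j : n) : 0 ≤ (P j j).re := by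
  have := (posSemidef_self_mul_conjTranspose P).diag_nonneg (i := j)
  rw [hP.eq, hP'.eq] at this
  exact (Complex.nonneg_iff.mp this).1

lemma IsHermitian.norm_mulVec_apply_le_of_isIdempotentElem {x : n → ℂ} (hx : star x ⬝ᵥ x = 1)
    (j : n) : ‖(P *ᵥ x) j‖ ≤ √(P j j).re := by
  simpa [hP.eq, hP'.eq, hx] using norm_mulVec_apply_le P x j

end StarProjection

lemma IsHermitian.norm_mulVec_apply_mul_le_of_isIdempotentElem {P Q : Matrix n n ℂ}
    (hP : P.IsHermitian) (hP' : IsIdempotentElem P) (hQ : Q.IsHermitian)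
    (hQ' : IsIdempotentElem Q) {x : n → ℂ} (hx : star x ⬝ᵥ x = 1) (j : n) :
    ‖(P *ᵥ x) j‖ * ‖(Q *ᵥ x) j‖ ≤ √((P j j).re * (Q j j).re) := by
  rw [Real.sqrt_mul (hP.re_diag_nonneg_of_isIdempotentElem hP' j)]
  exact mul_le_mul (hP.norm_mulVec_apply_le_of_isIdempotentElem hP' hx j)
    (hQ.norm_mulVec_apply_le_of_isIdempotentElem hQ' hx j) (norm_nonneg _) (Real.sqrt_nonneg _)

end Matrix

lemma norm_geom_sum_le_of_norm_eq_one {𝕜 : Type*} [NormedDivisionRing 𝕜] {z : 𝕜}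
    (hz : ‖z‖ = 1) (hz1 : z ≠ 1) (K : ℕ) :
    ‖∑ k ∈ range K, z ^ k‖ ≤ 2 / ‖z - 1‖ := by
  rw [geom_sum_eq hz1, norm_div]
  gcongr
  calc ‖z ^ K - 1‖ ≤ ‖z ^ K‖ + ‖(1 : 𝕜)‖ := norm_sub_le _ _
    _ = 2 := by rw [norm_pow, hz, one_pow, norm_one]; norm_num

lemma Complex.star_mul_self_of_norm_eq_one {z : ℂ} (hz : ‖z‖ = 1) : star z * z = 1 := by
  rw [Complex.star_def, Complex.conj_mul', hz]; norm_num

section Ergodic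

variable {ι : Type*} {c : ι → ℂ}

lemma norm_avg_geom_sum_star_mul_le (hc : ∀ s, ‖c s‖ = 1) {r s : ι} (hrs : c r ≠ c s) (K : ℕ) :
    ‖(K : ℂ)⁻¹ * ∑ k ∈ range K, (star (c r) * c s) ^ k‖ ≤ (K : ℝ)⁻¹ * (2 / ‖c r - c s‖) := by
  have hsub : star (c r) * c s - 1 = star (c r) * (c s - c r) := by
    rw [mul_sub, Complex.star_mul_self_of_norm_eq_one (hc r)]
  have hne : star (c r) * c s ≠ 1 := by
    rw [← sub_ne_zero, hsub]
    exact mul_ne_zero (by simp [← norm_ne_zero_iff, hc r]) (sub_ne_zero.mpr hrs.symm)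
  have hgeom := norm_geom_sum_le_of_norm_eq_one (by simp [hc r, hc s]) hne K
  rw [hsub, norm_mul, norm_star, hc r, one_mul, norm_sub_rev] at hgeom
  rw [norm_mul, norm_inv, Complex.norm_natCast]
  gcongr

variable [Fintype ι] (w : ι → ℂ)

lemma star_sum_pow_mul_mul_sum_pow_mul (k : ℕ) :
    star (∑ s, c s ^ k * w s) * ∑ s, c s ^ k * w s =
      ∑ r, ∑ s, (star (c r) * c s) ^ k * (star (w r) * w s) := by
  rw [star_sum, sum_mul_sum]
  refine sum_congr rfl fun r _ => sum_congr rfl fun s _ => ?_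
  rw [star_mul', star_pow, mul_pow]
  ring

theorem norm_avg_star_mul_self_sum_pow_mul_sub_le [DecidableEq ι] (hc : ∀ s, ‖c s‖ = 1)
    (hinj : Function.Injective c) {K : ℕ} (hK : 0 < K) :
    ‖(K : ℂ)⁻¹ * ∑ k ∈ range K, star (∑ s, c s ^ k * w s) * ∑ s, c s ^ k * w s -
        ∑ s, star (w s) * w s‖ ≤
      2 / K * ∑ r, ∑ s, if r ≠ s then ‖w r‖ * ‖w s‖ / ‖c r - c s‖ else 0 := by
  set a : ι → ι → ℂ := fun r s => (K : ℂ)⁻¹ * ∑ k ∈ range K, (star (c r) * c s) ^ k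
  have hdiag : ∀ r, a r r = 1 := fun r => by
    simp only [a, Complex.star_mul_self_of_norm_eq_one (hc r), one_pow, sum_const, card_range,
      nsmul_eq_mul, mul_one]
    exact inv_mul_cancel₀ (by exact_mod_cast hK.ne')
  have havg : (K : ℂ)⁻¹ * ∑ k ∈ range K, star (∑ s, c s ^ k * w s) * ∑ s, c s ^ k * w s =
      ∑ r, ∑ s, a r s * (star (w r) * w s) := by
    simp only [star_sum_pow_mul_mul_sum_pow_mul]
    simp only [a, mul_sum, sum_mul]
    rw [sum_comm]
    refine sum_congr rfl fun r _ => ?_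
    rw [sum_comm]
    exact sum_congr rfl fun s _ => sum_congr rfl fun k _ => by ring
  have hdiag_sum : ∑ s, star (w s) * w s =
      ∑ r, ∑ s, if r = s then a r s * (star (w r) * w s) else 0 := by
    simp [hdiag]
  have hexpand : (K : ℂ)⁻¹ * ∑ k ∈ range K, star (∑ s, c s ^ k * w s) * ∑ s, c s ^ k * w s -
      ∑ s, star (w s) * w s =
        ∑ r, ∑ s, if r ≠ s then a r s * (star (w r) * w s) else 0 := by
    rw [havg, hdiag_sum, ← sum_sub_distrib]
    refine sum_congr rfl fun r _ => ?_
    rw [← sum_sub_distrib]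
    refine sum_congr rfl fun s _ => ?_
    split_ifs <;> simp_all
  rw [hexpand, mul_sum]
  refine (norm_sum_le _ _).trans (sum_le_sum fun r _ => ?_)
  rw [mul_sum]
  refine (norm_sum_le _ _).trans (sum_le_sum fun s _ => ?_)
  split_ifs with hrs
  · calc ‖a r s * (star (w r) * w s)‖ = ‖a r s‖ * (‖w r‖ * ‖w s‖) := by
          rw [norm_mul, norm_mul (star (w r)), norm_star]
      _ ≤ (K : ℝ)⁻¹ * (2 / ‖c r - c s‖) * (‖w r‖ * ‖w s‖) := by
          gcongr
          exact norm_avg_geom_sum_star_mul_le hc (hinj.ne hrs) K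
      _ = 2 / K * (‖w r‖ * ‖w s‖ / ‖c r - c s‖) := by ring
  · simp

end Ergodic

theorem avg_prob_deviation_bound_general (ℓ m : ℕ)
    (U : Matrix (Fin ℓ) (Fin ℓ) ℂ)
    (lam : Fin m → ℂ) (F : Fin m → Matrix (Fin ℓ) (Fin ℓ) ℂ)
    (hdist : Function.Injective lam)
    (hmod : ∀ r, ‖lam r‖ = 1)
    (hherm : ∀ r, (F r)ᴴ = F r)
    (hidem : ∀ r, F r * F r = F r)
    (horth : ∀ r s, r ≠ s → F r * F s = 0)
    (hsum : ∑ r, F r = 1)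
    (hspec : U = ∑ r, lam r • F r)
    (x : Fin ℓ → ℂ) (hx : star x ⬝ᵥ x = 1)
    (K : ℕ) (hK : 0 < K) :
    ∑ j : Fin ℓ,
      ‖
        ((K : ℂ)⁻¹ *
            ∑ k ∈ Finset.range K,
              star x ⬝ᵥ (((U ^ k)ᴴ * Matrix.single j j 1 * U ^ k) *ᵥ x) -
          ∑ r, star x ⬝ᵥ ((F r * Matrix.single j j 1 * F r) *ᵥ x))‖ ≤
      (2 / (K : ℝ)) *
        ∑ r, ∑ s,
          if r ≠ s then
            ∑ j : Fin ℓ,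
              Real.sqrt ((F r j j).re * (F s j j).re) / ‖lam r - lam s‖
          else 0 := by
  have hF : CompleteOrthogonalIdempotents F := ⟨⟨hidem, fun r s => horth r s⟩, hsum⟩
  set v : Fin ℓ → Fin m → ℂ := fun j r => (F r *ᵥ x) j
  have hevolve (k : ℕ) (j : Fin ℓ) :
      star x ⬝ᵥ (((U ^ k)ᴴ * single j j 1 * U ^ k) *ᵥ x) =
        star (∑ r, lam r ^ k * v j r) * ∑ r, lam r ^ k * v j r := by
    have hUk : (U ^ k *ᵥ x) j = ∑ r, lam r ^ k * v j r := by
      simp [v, hspec, hF.sum_smul_pow, sum_mulVec, smul_mulVec]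
    rw [dotProduct_conjTranspose_mul_single_mul_mulVec, hUk]
  have hlimit (r : Fin m) (j : Fin ℓ) :
      star x ⬝ᵥ ((F r * single j j 1 * F r) *ᵥ x) = star (v j r) * v j r := by
    simpa [hherm] using dotProduct_conjTranspose_mul_single_mul_mulVec (F r) x j
  calc _ ≤ ∑ j, 2 / (K : ℝ) * ∑ r, ∑ s,
          if r ≠ s then ‖v j r‖ * ‖v j s‖ / ‖lam r - lam s‖ else 0 := by
        simp only [hevolve, hlimit]
        exact sum_le_sum fun j _ => norm_avg_star_mul_self_sum_pow_mul_sub_le (v j) hmod hdist hK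
    _ ≤ ∑ j, 2 / (K : ℝ) * ∑ r, ∑ s,
          if r ≠ s then √((F r j j).re * (F s j j).re) / ‖lam r - lam s‖ else 0 := by
        gcongr with j _ r _ s
        split_ifs
        · exact div_le_div_of_nonneg_right (IsHermitian.norm_mulVec_apply_mul_le_of_isIdempotentElem
            (hherm r) (hidem r) (hherm s) (hidem s) hx j) (norm_nonneg _)
        · rfl
    _ = _ := by
        rw [← mul_sum, sum_comm]
        refine congrArg _ (sum_congr rfl fun r _ => ?_)
        rw [sum_comm]
        exact sum_congr rfl fun s _ => by split_ifs <;> simp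

/-- For a unitary `U` with spectral decomposition `U = ∑ r, λ r • F r`,
a unit vector `x`, and a positive integer `K`, the total deviation of the `K`-step
average arc probabilities from the limiting probabilities is at most
`(2/K) ∑_{r ≠ s} ∑_j √((F_r)_jj (F_s)_jj) / |λ_r − λ_s|`. -/
theorem avg_prob_deviation_bound (ℓ m : ℕ) (hℓ : 0 < ℓ)
    (U : Matrix (Fin ℓ) (Fin ℓ) ℂ)
    (hU : U ∈ Matrix.unitaryGroup (Fin ℓ) ℂ)
    (lam : Fin m → ℂ) (F : Fin m → Matrix (Fin ℓ) (Fin ℓ) ℂ)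
    (hdist : Function.Injective lam)
    (hmod : ∀ r, ‖lam r‖ = 1)
    (hherm : ∀ r, (F r)ᴴ = F r)
    (hidem : ∀ r, F r * F r = F r)
    (horth : ∀ r s, r ≠ s → F r * F s = 0)
    (hsum : ∑ r, F r = 1)
    (hspec : U = ∑ r, lam r • F r)
    (x : Fin ℓ → ℂ) (hx : star x ⬝ᵥ x = 1)
    (K : ℕ) (hK : 0 < K) :
    ∑ j : Fin ℓ,
      ‖
        ((K : ℂ)⁻¹ *
            ∑ k ∈ Finset.range K,
              star x ⬝ᵥ (((U ^ k)ᴴ * Matrix.single j j 1 * U ^ k) *ᵥ x) -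
          ∑ r, star x ⬝ᵥ ((F r * Matrix.single j j 1 * F r) *ᵥ x))‖ ≤
      (2 / (K : ℝ)) *
        ∑ r, ∑ s,
          if r ≠ s then
            ∑ j : Fin ℓ,
              Real.sqrt ((F r j j).re * (F s j j).re) / ‖lam r - lam s‖
          else 0 :=
  avg_prob_deviation_bound_general ℓ m U lam F hdist hmod hherm hidem horth hsum hspec x hx K hK
end

section
/- Let U be an ℓ×ℓ complex unitary matrix with ℓ distinct eigenvalues λ_1, …, λ_ℓ and a corresponding orthonormal basis of eigenvectors z_1, …, z_ℓ (so U z_r = λ_r z_r). Let x = Σ_{r=1}^ℓ a_r z_r with Σ_r |a_r|² = 1, and let D_S be the diagonal 0–1 characteristic matrix of a subset S of coordinates. Then the time averages (1/K) Σ_{k=0}^{K-1} x* (U^k)* D_S U^k x converge, as K → ∞, to Σ_{r=1}^ℓ |a_r|² (z_r* D_S z_r). -/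
/-!
Expanding `x` in the eigenbasis turns the `k`-th term into
`∑ r, ∑ s, conj (a r) * a s * (z r* D_S z s) * (conj (lam r) * lam s) ^ k`.
Each `conj (lam r) * lam s` lies on the unit circle, so its Cesàro means converge to `1` if it
equals `1` and to `0` otherwise, since the geometric sums stay bounded. As the eigenvalues are
distinct, `conj (lam r) * lam s = 1` exactly when `r = s`, leaving the diagonal terms.
-/

open Matrix Filter Finset

/-- The diagonal 0–1 characteristic matrix of a subset `S` of coordinates. -/
noncomputable def charMatrix {ℓ : ℕ} (S : Finset (Fin ℓ)) : Matrix (Fin ℓ) (Fin ℓ) ℂ :=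
  Matrix.diagonal fun i => if i ∈ S then 1 else 0

open scoped Topology

theorem norm_geom_sum_le_of_norm_le_one {R : Type*} [NormedDivisionRing R] {μ : R}
    (hμ : ‖μ‖ ≤ 1) (h1 : μ ≠ 1) (K : ℕ) :
    ‖∑ k ∈ range K, μ ^ k‖ ≤ 2 / ‖μ - 1‖ := by
  rw [geom_sum_eq h1, norm_div]
  gcongr
  calc ‖μ ^ K - 1‖ ≤ ‖μ ^ K‖ + ‖(1 : R)‖ := norm_sub_le _ _
    _ ≤ 1 + 1 := by
      gcongr
      · simpa only [norm_pow] using pow_le_one₀ (norm_nonneg μ) hμ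
      · rw [norm_one]
    _ = 2 := one_add_one_eq_two

section Cesaro

variable {𝕜 : Type*} [RCLike 𝕜]

theorem tendsto_inv_mul_geom_sum {μ : 𝕜} (hμ : ‖μ‖ ≤ 1) :
    Tendsto (fun K : ℕ => (K : 𝕜)⁻¹ * ∑ k ∈ range K, μ ^ k) atTop
      (𝓝 (if μ = 1 then 1 else 0)) := by
  split_ifs with h1
  · subst h1
    simp only [one_pow, sum_const, card_range, nsmul_eq_mul, mul_one]
    exact tendsto_const_nhds.congr' <| (eventually_ne_atTop 0).mono fun K hK =>
      (inv_mul_cancel₀ (Nat.cast_ne_zero.2 hK)).symm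
  · exact tendsto_inv_atTop_nhds_zero_nat.zero_mul_isBoundedUnder_le
      ⟨2 / ‖μ - 1‖, eventually_map.2 <| .of_forall (norm_geom_sum_le_of_norm_le_one hμ h1)⟩

theorem tendsto_inv_mul_sum_range_sum_pow {ι : Type*} [Fintype ι] (c μ : ι → 𝕜)
    (hμ : ∀ i, ‖μ i‖ ≤ 1) :
    Tendsto (fun K : ℕ => (K : 𝕜)⁻¹ * ∑ k ∈ range K, ∑ i, c i * μ i ^ k) atTop
      (𝓝 (∑ i, if μ i = 1 then c i else 0)) := by
  have h : ∀ K : ℕ, (K : 𝕜)⁻¹ * ∑ k ∈ range K, ∑ i, c i * μ i ^ k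
      = ∑ i, c i * ((K : 𝕜)⁻¹ * ∑ k ∈ range K, μ i ^ k) := fun K => by
    simp only [Finset.mul_sum]
    rw [Finset.sum_comm]
    exact sum_congr rfl fun i _ => sum_congr rfl fun k _ => by ring
  simp only [h]
  refine tendsto_finsetSum _ fun i _ => ?_
  simpa only [mul_ite, mul_one, mul_zero] using (tendsto_inv_mul_geom_sum (hμ i)).const_mul (c i)

theorem conj_mul_eq_one_iff {μ ν : 𝕜} (hμ : ‖μ‖ = 1) : starRingEnd 𝕜 μ * ν = 1 ↔ μ = ν := by
  rw [← RCLike.inv_eq_conj hμ, inv_mul_eq_one₀ (norm_ne_zero_iff.1 (hμ ▸ one_ne_zero))]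

end Cesaro

section Matrix

variable {n R : Type*} [Fintype n]

theorem pow_mulVec_of_mulVec_eq_smul [CommSemiring R] [DecidableEq n] {U : Matrix n n R}
    {v : n → R} {μ : R} (h : U *ᵥ v = μ • v) (k : ℕ) : (U ^ k) *ᵥ v = μ ^ k • v := by
  induction k with
  | zero => simp
  | succ k ih => rw [pow_succ', ← mulVec_mulVec, ih, mulVec_smul, h, smul_smul, ← pow_succ]

variable [CommRing R] [StarRing R]

theorem star_dotProduct_conjTranspose_mul_mul_mulVec (V D : Matrix n n R) (x : n → R) :
    star x ⬝ᵥ ((Vᴴ * D * V) *ᵥ x) = star (V *ᵥ x) ⬝ᵥ (D *ᵥ V *ᵥ x) := by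
  rw [← mulVec_mulVec, ← mulVec_mulVec, dotProduct_mulVec, ← star_mulVec]

theorem star_sum_smul_dotProduct_mulVec_sum_smul {ι : Type*} [Fintype ι] (D : Matrix n n R)
    (z : ι → n → R) (b c : ι → R) :
    star (∑ r, b r • z r) ⬝ᵥ (D *ᵥ ∑ s, c s • z s)
      = ∑ r, ∑ s, star (b r) * c s * (star (z r) ⬝ᵥ (D *ᵥ z s)) := by
  simp only [star_sum, star_smul, mulVec_sum, mulVec_smul, sum_dotProduct, dotProduct_sum,
    smul_dotProduct, dotProduct_smul, smul_eq_mul, mul_sum]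
  rw [sum_comm]
  exact sum_congr rfl fun r _ => sum_congr rfl fun s _ => by ring

end Matrix

section Eigen

open scoped ComplexOrder

variable {n ι 𝕜 : Type*} [Fintype n] [DecidableEq n] [RCLike 𝕜]

theorem norm_eq_one_of_mem_unitaryGroup_of_mulVec_eq_smul {U : Matrix n n 𝕜}
    (hU : U ∈ unitaryGroup n 𝕜) {v : n → 𝕜} (hv : v ≠ 0) {μ : 𝕜} (h : U *ᵥ v = μ • v) :
    ‖μ‖ = 1 := by
  have hUv : star (U *ᵥ v) ⬝ᵥ (U *ᵥ v) = star v ⬝ᵥ v := by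
    rw [star_mulVec, ← dotProduct_mulVec, mulVec_mulVec, ← star_eq_conjTranspose,
      mem_unitaryGroup_iff'.1 hU, one_mulVec]
  rw [h, star_smul, smul_dotProduct, dotProduct_smul, smul_smul, smul_eq_mul] at hUv
  have hconj : starRingEnd 𝕜 μ * μ = 1 :=
    mul_right_cancel₀ (dotProduct_star_self_eq_zero.not.2 hv) (by simpa [mul_comm] using hUv)
  rw [RCLike.conj_mul] at hconj
  exact (pow_eq_one_iff_of_nonneg (norm_nonneg μ) two_ne_zero).1 (by exact_mod_cast hconj)

theorem star_dotProduct_conjTranspose_pow_mul_mul_pow_mulVec [Fintype ι] {U : Matrix n n 𝕜}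
    {z : ι → n → 𝕜} {lam : ι → 𝕜} (heig : ∀ r, U *ᵥ z r = lam r • z r)
    (D : Matrix n n 𝕜) (a : ι → 𝕜) (k : ℕ) :
    star (∑ r, a r • z r) ⬝ᵥ (((U ^ k)ᴴ * D * U ^ k) *ᵥ ∑ r, a r • z r)
      = ∑ r, ∑ s, starRingEnd 𝕜 (a r) * a s * (star (z r) ⬝ᵥ (D *ᵥ z s))
          * (starRingEnd 𝕜 (lam r) * lam s) ^ k := by
  have hUk : (U ^ k) *ᵥ ∑ r, a r • z r = ∑ r, (a r * lam r ^ k) • z r := by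
    simp only [mulVec_sum, mulVec_smul, pow_mulVec_of_mulVec_eq_smul (heig _), smul_smul]
  rw [star_dotProduct_conjTranspose_mul_mul_mulVec, hUk,
    star_sum_smul_dotProduct_mulVec_sum_smul]
  simp only [RCLike.star_def, map_mul, map_pow, mul_pow]
  exact sum_congr rfl fun r _ => sum_congr rfl fun s _ => by ring

end Eigen

theorem avg_prob_simple_eigenvalues_general (ℓ : ℕ)
    (U : Matrix (Fin ℓ) (Fin ℓ) ℂ)
    (hU : U ∈ Matrix.unitaryGroup (Fin ℓ) ℂ)
    (lam : Fin ℓ → ℂ) (hdist : Function.Injective lam)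
    (z : Fin ℓ → Fin ℓ → ℂ)
    (hortho : ∀ r s, star (z r) ⬝ᵥ z s = if r = s then 1 else 0)
    (heig : ∀ r, U *ᵥ z r = lam r • z r)
    (a : Fin ℓ → ℂ) (x : Fin ℓ → ℂ)
    (hx : x = ∑ r, a r • z r)
    (S : Finset (Fin ℓ)) :
    Filter.Tendsto
      (fun K : ℕ => (K : ℂ)⁻¹ *
        ∑ k ∈ Finset.range K,
          star x ⬝ᵥ (((U ^ k)ᴴ * charMatrix S * U ^ k) *ᵥ x))
      Filter.atTop
      (nhds (∑ r, (‖a r‖ : ℂ) ^ 2 * (star (z r) ⬝ᵥ (charMatrix S *ᵥ z r)))) := by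
  have hz : ∀ r, z r ≠ 0 := fun r h => by simpa [h] using hortho r r
  have hlam : ∀ r, ‖lam r‖ = 1 := fun r =>
    norm_eq_one_of_mem_unitaryGroup_of_mulVec_eq_smul hU (hz r) (heig r)
  have hres : ∀ r s, starRingEnd ℂ (lam r) * lam s = 1 ↔ r = s := fun r s =>
    (conj_mul_eq_one_iff (hlam r)).trans hdist.eq_iff
  subst hx
  simp only [star_dotProduct_conjTranspose_pow_mul_mul_pow_mulVec heig, ← Fintype.sum_prod_type']
  convert tendsto_inv_mul_sum_range_sum_pow _ (fun p : Fin ℓ × Fin ℓ =>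
    starRingEnd ℂ (lam p.1) * lam p.2) fun p => by simp [hlam]
  simp only [Fintype.sum_prod_type, hres, sum_ite_eq, mem_univ, if_true, Complex.conj_mul']

/-- If `U` is unitary with ℓ distinct eigenvalues and an orthonormal
eigenbasis `z_1, …, z_ℓ`, and `x = ∑ r, a_r z_r` with `∑ r, |a_r|² = 1`, then the
time averages `(1/K) ∑_{k<K} x* (U^k)* D_S U^k x` converge to
`∑ r, |a_r|² (z_r* D_S z_r)`. -/
theorem avg_prob_simple_eigenvalues (ℓ : ℕ)
    (U : Matrix (Fin ℓ) (Fin ℓ) ℂ)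
    (hU : U ∈ Matrix.unitaryGroup (Fin ℓ) ℂ)
    (lam : Fin ℓ → ℂ) (hdist : Function.Injective lam)
    (z : Fin ℓ → Fin ℓ → ℂ)
    (hortho : ∀ r s, star (z r) ⬝ᵥ z s = if r = s then 1 else 0)
    (heig : ∀ r, U *ᵥ z r = lam r • z r)
    (a : Fin ℓ → ℂ) (x : Fin ℓ → ℂ)
    (hx : x = ∑ r, a r • z r)
    (ha : ∑ r, ‖a r‖ ^ 2 = 1)
    (S : Finset (Fin ℓ)) :
    Filter.Tendsto
      (fun K : ℕ => (K : ℂ)⁻¹ *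
        ∑ k ∈ Finset.range K,
          star x ⬝ᵥ (((U ^ k)ᴴ * charMatrix S * U ^ k) *ᵥ x))
      Filter.atTop
      (nhds (∑ r, (‖a r‖ : ℂ) ^ 2 * (star (z r) ⬝ᵥ (charMatrix S *ᵥ z r)))) :=
  avg_prob_simple_eigenvalues_general ℓ U hU lam hdist z hortho heig a x hx S
end
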